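/- Let β : ℕ → ℝ satisfy 0 < β_i < 1 for all i ≥ 1, let ᾱ_t = ∏_{i=1}^{t} (1 − β_i), and fix two distinct clean values a ≠ b in ℝ. For t ≥ 1, the KL divergence between the forward-process marginals of the two samples at time t satisfies KL(N(√ᾱ_t · a, 1 − ᾱ_t) ‖ N(√ᾱ_t · b, 1 − ᾱ_t)) = ᾱ_t · (a − b)² / (2(1 − ᾱ_t)) (as an extended nonnegative real, the right-hand side under ENNReal.ofReal), and this quantity is strictly decreasing in t: for all t ≥ 1, the divergence at time t + 1 is strictly less than the divergence at time t. -/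

import Mathlib

/-!
Two Gaussians with the same variance `v` and means `m₁, m₂` have log-likelihood ratio
`x ↦ (m₁ - m₂) / v * (x - m₁) + (m₁ - m₂)² / (2 v)`, an affine function whose mean under
`N(m₁, v)` is `(m₁ - m₂)² / (2 v)`. For the forward marginals this gives
`ᾱ_t (a - b)² / (2 (1 - ᾱ_t))`, which is strictly increasing in `ᾱ_t ∈ [0, 1)`, while
`ᾱ_t` itself strictly decreases because every factor `1 - β_i` lies in `(0, 1)`.
-/

open MeasureTheory ProbabilityTheory Real Finset
open scoped ENNReal NNReal Classical

/-- Kullback–Leibler divergence of `μ` from `ν`: the integral of the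
log-likelihood ratio `log (dμ/dν)` with respect to `μ` when `μ ≪ ν` (and the
integral is well defined), and `∞` otherwise. -/
noncomputable def klDiv {α : Type*} [MeasurableSpace α] (μ ν : Measure α) : ℝ≥0∞ :=
  if μ ≪ ν ∧ Integrable (llr μ ν) μ then ENNReal.ofReal (∫ x, llr μ ν x ∂μ) else ∞

section GaussianKL

variable {m₁ m₂ : ℝ} {v : ℝ≥0}

lemma gaussianReal_absolutelyContinuous_gaussianReal (hv : v ≠ 0) :
    gaussianReal m₁ v ≪ gaussianReal m₂ v :=
  (gaussianReal_absolutelyContinuous m₁ hv).trans (gaussianReal_absolutelyContinuous' m₂ hv)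

lemma log_gaussianPDFReal_div_gaussianPDFReal (hv : v ≠ 0) (x : ℝ) :
    Real.log (gaussianPDFReal m₁ v x / gaussianPDFReal m₂ v x)
      = (m₁ - m₂) / v * (x - m₁) + (m₁ - m₂) ^ 2 / (2 * v) := by
  have hv' : (0 : ℝ) < v := by positivity
  have hc : (Real.sqrt (2 * π * v))⁻¹ ≠ 0 := by positivity
  rw [gaussianPDFReal, gaussianPDFReal, mul_div_mul_left _ _ hc, ← Real.exp_sub, Real.log_exp]
  field_simp
  ring

lemma llr_gaussianReal_ae_eq (hv : v ≠ 0) :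
    llr (gaussianReal m₁ v) (gaussianReal m₂ v)
      =ᵐ[gaussianReal m₁ v] fun x ↦ (m₁ - m₂) / v * (x - m₁) + (m₁ - m₂) ^ 2 / (2 * v) := by
  have hac := gaussianReal_absolutelyContinuous_gaussianReal (m₁ := m₁) (m₂ := m₂) hv
  have hvol : gaussianReal m₁ v ≪ volume := gaussianReal_absolutelyContinuous m₁ hv
  have hratio := hac.ae_le (Measure.rnDeriv_eq_div (gaussianReal_absolutelyContinuous m₁ hv)
    (gaussianReal_absolutelyContinuous m₂ hv))
  filter_upwards [hratio, hvol.ae_le (rnDeriv_gaussianReal m₁ v),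
    hvol.ae_le (rnDeriv_gaussianReal m₂ v)] with x hx h₁ h₂
  rw [llr, hx, h₁, h₂, ENNReal.toReal_div, toReal_gaussianPDF, toReal_gaussianPDF,
    log_gaussianPDFReal_div_gaussianPDFReal hv]

lemma integrable_fun_id_gaussianReal : Integrable (fun x ↦ x) (gaussianReal m₁ v) :=
  (memLp_id_gaussianReal 1).integrable le_rfl

theorem klDiv_gaussianReal_gaussianReal (hv : v ≠ 0) :
    klDiv (gaussianReal m₁ v) (gaussianReal m₂ v) = ENNReal.ofReal ((m₁ - m₂) ^ 2 / (2 * v)) := by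
  have hint : Integrable (fun x ↦ x - m₁) (gaussianReal m₁ v) :=
    integrable_fun_id_gaussianReal.sub (integrable_const _)
  have hllr := llr_gaussianReal_ae_eq (m₁ := m₁) (m₂ := m₂) hv
  have hint_llr : Integrable (llr (gaussianReal m₁ v) (gaussianReal m₂ v)) (gaussianReal m₁ v) :=
    ((hint.const_mul _).add (integrable_const _)).congr hllr.symm
  rw [klDiv, if_pos ⟨gaussianReal_absolutelyContinuous_gaussianReal hv, hint_llr⟩,
    integral_congr_ae hllr, integral_add (hint.const_mul _) (integrable_const _),
    integral_const_mul, integral_sub integrable_fun_id_gaussianReal (integrable_const _),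
    integral_id_gaussianReal]
  simp

end GaussianKL

section NoiseSchedule

variable {β : ℕ → ℝ}

lemma prod_Icc_one_sub_pos (hβ : ∀ i, 1 ≤ i → β i < 1) (t : ℕ) :
    0 < ∏ i ∈ Icc 1 t, (1 - β i) :=
  prod_pos fun i hi ↦ sub_pos.2 (hβ i (mem_Icc.1 hi).1)

lemma strictAnti_prod_Icc_one_sub (hβ : ∀ i, 1 ≤ i → 0 < β i ∧ β i < 1) :
    StrictAnti fun t ↦ ∏ i ∈ Icc 1 t, (1 - β i) := by
  refine strictAnti_nat_of_succ_lt fun t ↦ ?_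
  rw [prod_Icc_succ_top (by omega)]
  have hpos := prod_Icc_one_sub_pos (fun i hi ↦ (hβ i hi).2) t
  exact mul_lt_of_lt_one_right hpos (by linarith [(hβ (t + 1) (by omega)).1])

lemma prod_Icc_one_sub_lt_one (hβ : ∀ i, 1 ≤ i → 0 < β i ∧ β i < 1) {t : ℕ} (ht : 1 ≤ t) :
    ∏ i ∈ Icc 1 t, (1 - β i) < 1 := by
  simpa using strictAnti_prod_Icc_one_sub hβ (show 0 < t by omega)

end NoiseSchedule

lemma strictMonoOn_mul_div_two_mul_one_sub {c : ℝ} (hc : 0 < c) :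
    StrictMonoOn (fun α : ℝ ↦ α * c / (2 * (1 - α))) (Set.Ico 0 1) := by
  rintro α ⟨hα₀, -⟩ α' ⟨-, hα'₁⟩ hlt
  have h₁ : 0 < 2 * (1 - α') := by linarith
  calc α * c / (2 * (1 - α)) ≤ α * c / (2 * (1 - α')) := by gcongr
    _ < α' * c / (2 * (1 - α')) := by gcongr

theorem klDiv_forward_marginal {α : ℝ} (hα₀ : 0 ≤ α) (hα₁ : α < 1) (a b : ℝ) :
    klDiv (gaussianReal (Real.sqrt α * a) (1 - α).toNNReal)
        (gaussianReal (Real.sqrt α * b) (1 - α).toNNReal)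
      = ENNReal.ofReal (α * (a - b) ^ 2 / (2 * (1 - α))) := by
  have hv : (1 - α).toNNReal ≠ 0 := by simpa using hα₁
  rw [klDiv_gaussianReal_gaussianReal hv, Real.coe_toNNReal _ (by linarith), ← mul_sub, mul_pow,
    Real.sq_sqrt hα₀]

/-- **The KL divergence between the forward-process marginals of two distinct
clean samples decreases strictly with the timestep.** With `ᾱ_t = ∏_{i=1}^{t} (1 − β_i)`,
`0 < β_i < 1`, and `a ≠ b`, for every `t ≥ 1`,
`KL(N(√ᾱ_t a, 1 − ᾱ_t) ‖ N(√ᾱ_t b, 1 − ᾱ_t)) = ᾱ_t (a − b)² / (2(1 − ᾱ_t))`,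
and this KL divergence at time `t + 1` is strictly smaller than at time `t`. -/
theorem klDiv_forward_marginals_strict_anti
    (β : ℕ → ℝ) (hβ : ∀ i, 1 ≤ i → 0 < β i ∧ β i < 1)
    (ᾱ : ℕ → ℝ) (hᾱ : ∀ t, ᾱ t = ∏ i ∈ Finset.Icc 1 t, (1 - β i))
    (a b : ℝ) (hab : a ≠ b) :
    (∀ t, 1 ≤ t →
      klDiv (gaussianReal (Real.sqrt (ᾱ t) * a) (1 - ᾱ t).toNNReal)
          (gaussianReal (Real.sqrt (ᾱ t) * b) (1 - ᾱ t).toNNReal)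
        = ENNReal.ofReal (ᾱ t * (a - b) ^ 2 / (2 * (1 - ᾱ t)))) ∧
    (∀ t, 1 ≤ t →
      klDiv (gaussianReal (Real.sqrt (ᾱ (t + 1)) * a) (1 - ᾱ (t + 1)).toNNReal)
          (gaussianReal (Real.sqrt (ᾱ (t + 1)) * b) (1 - ᾱ (t + 1)).toNNReal)
        < klDiv (gaussianReal (Real.sqrt (ᾱ t) * a) (1 - ᾱ t).toNNReal)
            (gaussianReal (Real.sqrt (ᾱ t) * b) (1 - ᾱ t).toNNReal)) := by
  have hbounds : ∀ t, 1 ≤ t → 0 ≤ ᾱ t ∧ ᾱ t < 1 := fun t ht ↦ by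
    rw [hᾱ]
    exact ⟨(prod_Icc_one_sub_pos (fun i hi ↦ (hβ i hi).2) t).le, prod_Icc_one_sub_lt_one hβ ht⟩
  have hformula : ∀ t, 1 ≤ t → _ := fun t ht ↦
    klDiv_forward_marginal (hbounds t ht).1 (hbounds t ht).2 a b
  refine ⟨hformula, fun t ht ↦ ?_⟩
  have hdecay : ᾱ (t + 1) < ᾱ t := by
    simpa only [hᾱ] using strictAnti_prod_Icc_one_sub hβ (Nat.lt_succ_self t)
  have hgap : 0 < (a - b) ^ 2 := sq_pos_of_ne_zero (sub_ne_zero.2 hab)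
  obtain ⟨h₀, h₁⟩ := hbounds (t + 1) (by omega)
  rw [hformula t ht, hformula (t + 1) (by omega), ENNReal.ofReal_lt_ofReal_iff_of_nonneg
    (by positivity)]
  exact strictMonoOn_mul_div_two_mul_one_sub hgap ⟨h₀, h₁⟩ (hbounds t ht) hdecay
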